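/- arXiv:2501.06402 — 2 statements merged into one kernel-verified Lean document; each statement's English description precedes it below -/
import Mathlib

section
/- Let a, x, z ∈ ℂⁿ and b, y ∈ ℝ with b ≥ α₁·|⟪a,x⟫|² for some α₁ > 0, and y = |⟪a,x⟫|² + b. Then |(1 − y/(|⟪a,z⟫|² + b))·⟪a,z⟫| ≤ (1 + 1/(2√α₁))·|⟪a, z − e^{iφ}x⟫| for any phase e^{iφ} with |e^{iφ}| = 1, where on the left side x may be replaced by e^{iφ}x (i.e. the bound holds with h = e^{-iφ}z − x and |⟪a,h⟫| on the right). -/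
lemma key_ineq (A B b α₁ : ℝ) (hA : 0 ≤ A) (hB : 0 ≤ B) (hα : 0 < α₁)
    (hb : α₁ * B ^ 2 ≤ b) (hD : 0 < A ^ 2 + b) :
    |A ^ 2 - B ^ 2| / (A ^ 2 + b) * A ≤ (1 + 1 / (2 * Real.sqrt α₁)) * |A - B| := by
  have hs : 0 < Real.sqrt α₁ := Real.sqrt_pos.mpr hα
  have hs2 : Real.sqrt α₁ ^ 2 = α₁ := Real.sq_sqrt hα.le
  have h1 : |A ^ 2 - B ^ 2| = (A + B) * |A - B| := by
    rw [← abs_of_nonneg (by positivity : (0:ℝ) ≤ A + B), ← abs_mul]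
    ring_nf
  have h2 : (A + B) * A / (A ^ 2 + b) ≤ 1 + 1 / (2 * Real.sqrt α₁) := by
    rw [div_le_iff₀ hD]
    have h3 : 2 * A * (Real.sqrt α₁ * B) ≤ A ^ 2 + (Real.sqrt α₁ * B) ^ 2 :=
      two_mul_le_add_sq A (Real.sqrt α₁ * B)
    have h4 : A * B ≤ (A ^ 2 + b) / (2 * Real.sqrt α₁) := by
      rw [le_div_iff₀ (by positivity)]
      nlinarith
    have h5 : (A ^ 2 + b) / (2 * Real.sqrt α₁) = 1 / (2 * Real.sqrt α₁) * (A ^ 2 + b) := by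
      ring
    nlinarith
  calc |A ^ 2 - B ^ 2| / (A ^ 2 + b) * A
      = (A + B) * A / (A ^ 2 + b) * |A - B| := by rw [h1]; ring
    _ ≤ (1 + 1 / (2 * Real.sqrt α₁)) * |A - B| :=
        mul_le_mul_of_nonneg_right h2 (abs_nonneg _)

theorem stmt_3 (n : ℕ) (a x z : EuclideanSpace ℂ (Fin n)) (b y α₁ φ : ℝ)
    (hα₁ : 0 < α₁)
    (hb : α₁ * ‖(inner ℂ a x : ℂ)‖ ^ 2 ≤ b)
    (hy : y = ‖(inner ℂ a x : ℂ)‖ ^ 2 + b) :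
    ‖((1 - (y / (‖(inner ℂ a z : ℂ)‖ ^ 2 + b) : ℝ)) * (inner ℂ a z : ℂ))‖
      ≤ (1 + 1 / (2 * Real.sqrt α₁)) *
        ‖(inner ℂ a (z - Complex.exp (φ * Complex.I) • x) : ℂ)‖ := by
  set u : ℂ := inner ℂ a z with hu
  set v : ℂ := inner ℂ a x with hv
  set A := ‖u‖ with hA
  set B := ‖v‖ with hB
  have hA0 : 0 ≤ A := norm_nonneg u
  have hB0 : 0 ≤ B := norm_nonneg v
  have hb0 : 0 ≤ b := le_trans (by positivity) hb
  have hs : 0 < Real.sqrt α₁ := Real.sqrt_pos.mpr hα₁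
  have he : ‖Complex.exp (φ * Complex.I)‖ = 1 :=
    Complex.norm_exp_ofReal_mul_I φ
  have hinner : (inner ℂ a (z - Complex.exp (φ * Complex.I) • x) : ℂ)
      = u - Complex.exp (φ * Complex.I) * v := by
    rw [inner_sub_right, inner_smul_right]
  have hrhs : |A - B| ≤ ‖(inner ℂ a (z - Complex.exp (φ * Complex.I) • x) : ℂ)‖ := by
    rw [hinner]
    have : B = ‖Complex.exp (φ * Complex.I) * v‖ := by
      rw [norm_mul, he, one_mul]
    rw [this]
    exact abs_norm_sub_norm_le u _
  have hlhs : ‖(1 - ((y / (A ^ 2 + b) : ℝ) : ℂ)) * u‖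
      = |1 - y / (A ^ 2 + b)| * A := by
    rw [norm_mul]
    congr 1
    rw [show (1 - ((y / (A ^ 2 + b) : ℝ) : ℂ)) = (((1 - y / (A ^ 2 + b) : ℝ)) : ℂ) by
      push_cast; ring]
    exact Complex.norm_real _
  rw [hlhs]
  rcases eq_or_lt_of_le (by positivity : (0:ℝ) ≤ A ^ 2 + b) with hD | hD
  · have hAz : A = 0 := by nlinarith
    rw [hAz, mul_zero]
    positivity
  · have hcoef : |1 - y / (A ^ 2 + b)| = |A ^ 2 - B ^ 2| / (A ^ 2 + b) := by
      rw [hy]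
      rw [show 1 - (B ^ 2 + b) / (A ^ 2 + b) = (A ^ 2 - B ^ 2) / (A ^ 2 + b) by
        field_simp; ring]
      rw [abs_div, abs_of_pos hD]
    rw [hcoef]
    calc |A ^ 2 - B ^ 2| / (A ^ 2 + b) * A
        ≤ (1 + 1 / (2 * Real.sqrt α₁)) * |A - B| :=
          key_ineq A B b α₁ hA0 hB0 hα₁ hb hD
      _ ≤ (1 + 1 / (2 * Real.sqrt α₁)) *
            ‖(inner ℂ a (z - Complex.exp (φ * Complex.I) • x) : ℂ)‖ := by
          apply mul_le_mul_of_nonneg_left hrhs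
          positivity
end

section
/- Let ρ₂ = (2√39 − 12)/3, and let ρ ∈ (0, ρ₂], α₁ > 0, and α₂ satisfy α₁ ≤ α₂ < 3α₁ − (1+ρ)². Set U = (1+ρ)² + α₂ and L₁ = (1−ρ)² + α₁. Then Φ₁ := (1−6ρ)/(4U) − ρ²/(16L₁) > 0. -/
theorem stmt_14 (α₁ α₂ ρ : ℝ) (hα₁ : 0 < α₁) (hρ : 0 < ρ)
    (hρ2 : ρ ≤ (2 * Real.sqrt 39 - 12) / 3)
    (h12 : α₁ ≤ α₂) (h2 : α₂ < 3 * α₁ - (1 + ρ) ^ 2) :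
    0 < (1 - 6 * ρ) / (4 * ((1 + ρ) ^ 2 + α₂)) - ρ ^ 2 / (16 * ((1 - ρ) ^ 2 + α₁)) := by
  have hs2 : Real.sqrt 39 ^ 2 = 39 := Real.sq_sqrt (by norm_num)
  have hsnn : 0 ≤ Real.sqrt 39 := Real.sqrt_nonneg 39
  have hkey : 3 * ρ ^ 2 + 24 * ρ - 4 ≤ 0 := by
    have h1 : 3 * ρ + 12 ≤ 2 * Real.sqrt 39 := by linarith
    nlinarith [sq_nonneg (3 * ρ + 12)]
  have hs625 : Real.sqrt 39 < 6.25 := by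
    nlinarith
  have h6ρ : 1 - 6 * ρ > 0 := by nlinarith
  have hU : 0 < (1 + ρ) ^ 2 + α₂ := by nlinarith
  have hL : 0 < (1 - ρ) ^ 2 + α₁ := by positivity
  rw [div_sub_div _ _ (by positivity) (by positivity), div_pos_iff]
  left
  constructor
  · have hU3 : (1 + ρ) ^ 2 + α₂ < 3 * α₁ := by linarith
    nlinarith [mul_pos h6ρ hL, sq_nonneg ρ, mul_nonneg hα₁.le (neg_nonneg.2 hkey)]
  · positivity
end
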